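/- arXiv:1902.06949 — 4 statements merged into one kernel-verified Lean document; each statement's English description precedes it below -/
import Mathlib

section
/- Let Ω ⊆ ℝ³ be a smoothly bounded, simply connected domain with boundary ∂Ω, let Ω′ ⊇ closure(Ω) be open, and let ν : Ω′ → ℝ be smooth with ∇ν ≠ 0 on ∂Ω, such that the unit outward normal to ∂Ω is n = ∇ν/|∇ν|. Suppose there exist a closed set Z ⊆ ℝ³ of Lebesgue measure zero whose intersection with ∂Ω has surface measure zero, and functions ℓ, ψ, θ smooth on Ω′ \ Z whose gradients are nonvanishing and pairwise orthogonal on Ω′ \ Z, such that: Δℓ = 0 and Δψ = 0 on Ω \ Z; ∇ℓ·∇ν = 0 and ∇ψ·∇ν = 0 on ∂Ω \ Z; |∇ℓ| = |∇ψ| on Ω \ Z; and ν = N(θ, L_θ) on Ω′ \ Z for some smooth function N of two variables, where L_θ = ℓ·cos θ − ψ·sin θ. Then for every smooth σ : ℝ → ℝ the vector field w = cos(σ∘θ)·∇ψ + sin(σ∘θ)·∇ℓ satisfies w × curl w = 0 and div w = 0 on Ω \ Z, and w·n = 0 on ∂Ω \ Z. -/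
noncomputable section

/-- Points of `ℝ³`. -/
abbrev V3 : Type := Fin 3 → ℝ

/-- Standard basis vector. -/
def ee (i : Fin 3) : V3 := fun j => if j = i then 1 else 0

/-- Partial derivative in the `i`-th coordinate direction. -/
def pd (i : Fin 3) (f : V3 → ℝ) (x : V3) : ℝ := fderiv ℝ f x (ee i)

/-- Gradient of a scalar field. -/
def grad (f : V3 → ℝ) (x : V3) : V3 := fun i => pd i f x

/-- Divergence of a vector field. -/
def vdiv (w : V3 → V3) (x : V3) : ℝ :=
  pd 0 (fun y => w y 0) x + pd 1 (fun y => w y 1) x + pd 2 (fun y => w y 2) x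

/-- Curl of a vector field. -/
def vcurl (w : V3 → V3) (x : V3) : V3 :=
  ![pd 1 (fun y => w y 2) x - pd 2 (fun y => w y 1) x,
    pd 2 (fun y => w y 0) x - pd 0 (fun y => w y 2) x,
    pd 0 (fun y => w y 1) x - pd 1 (fun y => w y 0) x]

/-- Euclidean dot product on `ℝ³`. -/
def dot3 (a b : V3) : ℝ := a 0 * b 0 + a 1 * b 1 + a 2 * b 2

/-- Cross product on `ℝ³`. -/
def cross3 (a b : V3) : V3 :=
  ![a 1 * b 2 - a 2 * b 1, a 2 * b 0 - a 0 * b 2, a 0 * b 1 - a 1 * b 0]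

/-- Euclidean norm on `ℝ³`. -/
def norm3 (a : V3) : ℝ := Real.sqrt (dot3 a a)

/-- Laplacian of a scalar field. -/
def lap (f : V3 → ℝ) (x : V3) : ℝ := vdiv (grad f) x

/-- A smooth orthogonal coordinate system on `Ω`: three smooth scalar functions whose
gradients are nonvanishing and pairwise orthogonal at every point of `Ω`. -/
def OrthoSystem (Ω : Set V3) (f g h : V3 → ℝ) : Prop :=
  ContDiffOn ℝ (⊤ : ℕ∞) f Ω ∧ ContDiffOn ℝ (⊤ : ℕ∞) g Ω ∧ ContDiffOn ℝ (⊤ : ℕ∞) h Ω ∧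
    ∀ x ∈ Ω, grad f x ≠ 0 ∧ grad g x ≠ 0 ∧ grad h x ≠ 0 ∧
      dot3 (grad f x) (grad g x) = 0 ∧ dot3 (grad f x) (grad h x) = 0 ∧
      dot3 (grad g x) (grad h x) = 0

open MeasureTheory

open Real in
lemma pd_apply_fderiv' {f : V3 → ℝ} {x : V3} (hf : ContDiffAt ℝ (⊤ : ℕ∞) f x) (i j : Fin 3) :
    pd i (fun y => pd j f y) x = fderiv ℝ (fderiv ℝ f) x (ee i) (ee j) := by
  have hd : DifferentiableAt ℝ (fderiv ℝ f) x :=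
    (hf.fderiv_right (m := 1) (WithTop.coe_le_coe.mpr le_top)).differentiableAt one_ne_zero
  show fderiv ℝ (fun y => fderiv ℝ f y (ee j)) x (ee i) = _
  rw [fderiv_clm_apply hd (differentiableAt_const (ee j))]
  simp

lemma pd_second_symm' {f : V3 → ℝ} {x : V3} (hf : ContDiffAt ℝ (⊤ : ℕ∞) f x) (i j : Fin 3) :
    pd i (fun y => pd j f y) x = pd j (fun y => pd i f y) x := by
  rw [pd_apply_fderiv' hf, pd_apply_fderiv' hf]
  exact hf.isSymmSndFDerivAt (by rw [minSmoothness_of_isRCLikeNormedField]; exact WithTop.coe_le_coe.mpr le_top) (ee i) (ee j)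

lemma pd_formula' (i j : Fin 3) {θ ψ ℓ : V3 → ℝ} {σ : ℝ → ℝ} {x : V3}
    (hθ : ContDiffAt ℝ (⊤ : ℕ∞) θ x) (hψ : ContDiffAt ℝ (⊤ : ℕ∞) ψ x) (hℓ : ContDiffAt ℝ (⊤ : ℕ∞) ℓ x)
    (hσ : ContDiff ℝ (⊤ : ℕ∞) σ) :
    pd i (fun y => Real.cos (σ (θ y)) * pd j ψ y + Real.sin (σ (θ y)) * pd j ℓ y) x =
      -Real.sin (σ (θ x)) * deriv σ (θ x) * pd i θ x * pd j ψ x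
      + Real.cos (σ (θ x)) * pd i (fun y => pd j ψ y) x
      + Real.cos (σ (θ x)) * deriv σ (θ x) * pd i θ x * pd j ℓ x
      + Real.sin (σ (θ x)) * pd i (fun y => pd j ℓ y) x := by
  have hθd : HasFDerivAt θ (fderiv ℝ θ x) x := (hθ.differentiableAt (by simp)).hasFDerivAt
  have hσd : HasDerivAt σ (deriv σ (θ x)) (θ x) :=
    ((hσ.differentiable (by simp)) (θ x)).hasDerivAt
  have hcos : HasDerivAt (fun t => Real.cos (σ t))
      (-Real.sin (σ (θ x)) * deriv σ (θ x)) (θ x) :=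
    (Real.hasDerivAt_cos (σ (θ x))).comp (θ x) hσd
  have hsin : HasDerivAt (fun t => Real.sin (σ t))
      (Real.cos (σ (θ x)) * deriv σ (θ x)) (θ x) :=
    (Real.hasDerivAt_sin (σ (θ x))).comp (θ x) hσd
  have hC : HasFDerivAt (fun y => Real.cos (σ (θ y)))
      ((-Real.sin (σ (θ x)) * deriv σ (θ x)) • fderiv ℝ θ x) x :=
    hcos.comp_hasFDerivAt x hθd
  have hS : HasFDerivAt (fun y => Real.sin (σ (θ y)))
      ((Real.cos (σ (θ x)) * deriv σ (θ x)) • fderiv ℝ θ x) x :=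
    hsin.comp_hasFDerivAt x hθd
  have hψj : HasFDerivAt (fun y => pd j ψ y) (fderiv ℝ (fun y => pd j ψ y) x) x := by
    have : DifferentiableAt ℝ (fun y => (fderiv ℝ ψ y) (ee j)) x :=
      (((hψ.fderiv_right (m := (⊤ : ℕ∞)) (by simp))).clm_apply (contDiffAt_const)).differentiableAt (by simp)
    exact this.hasFDerivAt
  have hℓj : HasFDerivAt (fun y => pd j ℓ y) (fderiv ℝ (fun y => pd j ℓ y) x) x := by
    have : DifferentiableAt ℝ (fun y => (fderiv ℝ ℓ y) (ee j)) x :=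
      (((hℓ.fderiv_right (m := (⊤ : ℕ∞)) (by simp))).clm_apply (contDiffAt_const)).differentiableAt (by simp)
    exact this.hasFDerivAt
  have htot := (hC.mul hψj).add (hS.mul hℓj)
  have hfd : fderiv ℝ (fun y => Real.cos (σ (θ y)) * pd j ψ y + Real.sin (σ (θ y)) * pd j ℓ y) x = _ :=
    htot.fderiv
  show fderiv ℝ _ x (ee i) = _
  rw [hfd]
  simp only [ContinuousLinearMap.add_apply, ContinuousLinearMap.smul_apply, smul_eq_mul]
  show Real.cos (σ (θ x)) * pd i (fun y => pd j ψ y) x + pd j ψ x * (_ * pd i θ x)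
      + (Real.sin (σ (θ x)) * pd i (fun y => pd j ℓ y) x + pd j ℓ x * (_ * pd i θ x)) = _
  ring



/-- Singular solutions of the boundary value problem
`w × curl w = 0`, `div w = 0` in `Ω`, `w·n = 0` on `∂Ω` (with `n = ∇ν/|∇ν|`),
constructed from almost-everywhere-smooth orthogonal harmonic coordinates `(ℓ, ψ, θ)`
with `|∇ℓ| = |∇ψ|` and `ν = N(θ, L_θ)`, `L_θ = ℓ cos θ − ψ sin θ`. -/
theorem stmt2 (Ω Ω' : Set V3) (hΩ : IsOpen Ω) (hb : Bornology.IsBounded Ω)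
    (hsc : SimplyConnectedSpace Ω) (hΩ' : IsOpen Ω') (hsub : closure Ω ⊆ Ω')
    (ν : V3 → ℝ) (hν : ContDiffOn ℝ (⊤ : ℕ∞) ν Ω')
    (hνgrad : ∀ x ∈ frontier Ω, grad ν x ≠ 0)
    (Z : Set V3) (hZc : IsClosed Z) (hZnull : MeasureTheory.volume Z = 0)
    (hZsurf : μH[2] (Z ∩ frontier Ω) = 0)
    (ℓ ψ θ : V3 → ℝ) (hortho : OrthoSystem (Ω' \ Z) ℓ ψ θ)
    (hlapℓ : ∀ x ∈ Ω \ Z, lap ℓ x = 0)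
    (hlapψ : ∀ x ∈ Ω \ Z, lap ψ x = 0)
    (hbcℓ : ∀ x ∈ frontier Ω \ Z, dot3 (grad ℓ x) (grad ν x) = 0)
    (hbcψ : ∀ x ∈ frontier Ω \ Z, dot3 (grad ψ x) (grad ν x) = 0)
    (heq : ∀ x ∈ Ω \ Z, norm3 (grad ℓ x) = norm3 (grad ψ x))
    (N : ℝ × ℝ → ℝ) (hN : ContDiff ℝ (⊤ : ℕ∞) N)
    (hνN : ∀ x ∈ Ω' \ Z, ν x = N (θ x, ℓ x * Real.cos (θ x) - ψ x * Real.sin (θ x)))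
    (σ : ℝ → ℝ) (hσ : ContDiff ℝ (⊤ : ℕ∞) σ)
    (w : V3 → V3)
    (hw : w = fun x => Real.cos (σ (θ x)) • grad ψ x + Real.sin (σ (θ x)) • grad ℓ x) :
    (∀ x ∈ Ω \ Z, cross3 (w x) (vcurl w x) = 0 ∧ vdiv w x = 0) ∧
      (∀ x ∈ frontier Ω \ Z, dot3 (w x) (grad ν x) = 0) := by
  subst hw
  obtain ⟨hℓs, hψs, hθs, hor⟩ := hortho
  constructor
  · intro x hx
    obtain ⟨hxΩ, hxZ⟩ := hx
    have hxU : x ∈ Ω' \ Z := ⟨hsub (subset_closure hxΩ), hxZ⟩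
    have hUo : IsOpen (Ω' \ Z) := hΩ'.sdiff hZc
    have hnhds : Ω' \ Z ∈ nhds x := hUo.mem_nhds hxU
    have hℓa : ContDiffAt ℝ (⊤ : ℕ∞) ℓ x := hℓs.contDiffAt hnhds
    have hψa : ContDiffAt ℝ (⊤ : ℕ∞) ψ x := hψs.contDiffAt hnhds
    have hθa : ContDiffAt ℝ (⊤ : ℕ∞) θ x := hθs.contDiffAt hnhds
    have key : ∀ i j : Fin 3,
        pd i (fun y => Real.cos (σ (θ y)) * pd j ψ y + Real.sin (σ (θ y)) * pd j ℓ y) x =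
          -Real.sin (σ (θ x)) * deriv σ (θ x) * pd i θ x * pd j ψ x
          + Real.cos (σ (θ x)) * pd i (fun y => pd j ψ y) x
          + Real.cos (σ (θ x)) * deriv σ (θ x) * pd i θ x * pd j ℓ x
          + Real.sin (σ (θ x)) * pd i (fun y => pd j ℓ y) x :=
      fun i j => pd_formula' i j hθa hψa hℓa hσ
    obtain ⟨-, -, -, h12, h13, h23⟩ := hor x hxU
    simp only [dot3, grad] at h12 h13 h23
    have hlψ := hlapψ x ⟨hxΩ, hxZ⟩
    have hlℓ := hlapℓ x ⟨hxΩ, hxZ⟩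
    simp only [lap, vdiv, grad] at hlψ hlℓ
    have hnn : dot3 (grad ℓ x) (grad ℓ x) = dot3 (grad ψ x) (grad ψ x) := by
      have h1 : (0:ℝ) ≤ dot3 (grad ℓ x) (grad ℓ x) := by simp only [dot3]; nlinarith [mul_self_nonneg (grad ℓ x 0), mul_self_nonneg (grad ℓ x 1), mul_self_nonneg (grad ℓ x 2), mul_self_nonneg (grad ψ x 0), mul_self_nonneg (grad ψ x 1), mul_self_nonneg (grad ψ x 2)]
      have h2 : (0:ℝ) ≤ dot3 (grad ψ x) (grad ψ x) := by simp only [dot3]; nlinarith [mul_self_nonneg (grad ℓ x 0), mul_self_nonneg (grad ℓ x 1), mul_self_nonneg (grad ℓ x 2), mul_self_nonneg (grad ψ x 0), mul_self_nonneg (grad ψ x 1), mul_self_nonneg (grad ψ x 2)]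
      have h3 := heq x ⟨hxΩ, hxZ⟩
      simp only [norm3] at h3
      exact (Real.sqrt_inj h1 h2).mp h3
    simp only [dot3, grad] at hnn
    have hsψ := pd_second_symm' hψa
    have hsℓ := pd_second_symm' hℓa
    constructor
    · funext k
      simp only [cross3, vcurl]
      fin_cases k <;>
        [ (simp only [Fin.reduceFinMk, Fin.isValue, Matrix.cons_val_zero, Matrix.cons_val_one,
            Matrix.head_cons, Matrix.cons_val_two, Matrix.tail_cons, Pi.zero_apply,
            Pi.add_apply, Pi.smul_apply, smul_eq_mul, grad];
           simp only [key, hsψ 1 0, hsψ 2 0, hsψ 2 1, hsℓ 1 0, hsℓ 2 0, hsℓ 2 1];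
           linear_combination (Real.cos (σ (θ x)) * Real.sin (σ (θ x)) * deriv σ (θ x) * pd 0 θ x) * hnn
            + ((Real.cos (σ (θ x)) ^ 2 - Real.sin (σ (θ x)) ^ 2) * deriv σ (θ x) * pd 0 θ x) * h12
            + (Real.sin (σ (θ x)) ^ 2 * deriv σ (θ x) * pd 0 ψ x - Real.cos (σ (θ x)) * Real.sin (σ (θ x)) * deriv σ (θ x) * pd 0 ℓ x) * h13
            + (Real.cos (σ (θ x)) * Real.sin (σ (θ x)) * deriv σ (θ x) * pd 0 ψ x - Real.cos (σ (θ x)) ^ 2 * deriv σ (θ x) * pd 0 ℓ x) * h23);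
          (simp only [Fin.reduceFinMk, Fin.isValue, Matrix.cons_val_zero, Matrix.cons_val_one,
            Matrix.head_cons, Matrix.cons_val_two, Matrix.tail_cons, Pi.zero_apply,
            Pi.add_apply, Pi.smul_apply, smul_eq_mul, grad];
           simp only [key, hsψ 1 0, hsψ 2 0, hsψ 2 1, hsℓ 1 0, hsℓ 2 0, hsℓ 2 1];
           linear_combination (Real.cos (σ (θ x)) * Real.sin (σ (θ x)) * deriv σ (θ x) * pd 1 θ x) * hnn
            + ((Real.cos (σ (θ x)) ^ 2 - Real.sin (σ (θ x)) ^ 2) * deriv σ (θ x) * pd 1 θ x) * h12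
            + (Real.sin (σ (θ x)) ^ 2 * deriv σ (θ x) * pd 1 ψ x - Real.cos (σ (θ x)) * Real.sin (σ (θ x)) * deriv σ (θ x) * pd 1 ℓ x) * h13
            + (Real.cos (σ (θ x)) * Real.sin (σ (θ x)) * deriv σ (θ x) * pd 1 ψ x - Real.cos (σ (θ x)) ^ 2 * deriv σ (θ x) * pd 1 ℓ x) * h23);
          (simp only [Fin.reduceFinMk, Fin.isValue, Matrix.cons_val_zero, Matrix.cons_val_one,
            Matrix.head_cons, Matrix.cons_val_two, Matrix.tail_cons, Pi.zero_apply,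
            Pi.add_apply, Pi.smul_apply, smul_eq_mul, grad];
           simp only [key, hsψ 1 0, hsψ 2 0, hsψ 2 1, hsℓ 1 0, hsℓ 2 0, hsℓ 2 1];
           linear_combination (Real.cos (σ (θ x)) * Real.sin (σ (θ x)) * deriv σ (θ x) * pd 2 θ x) * hnn
            + ((Real.cos (σ (θ x)) ^ 2 - Real.sin (σ (θ x)) ^ 2) * deriv σ (θ x) * pd 2 θ x) * h12
            + (Real.sin (σ (θ x)) ^ 2 * deriv σ (θ x) * pd 2 ψ x - Real.cos (σ (θ x)) * Real.sin (σ (θ x)) * deriv σ (θ x) * pd 2 ℓ x) * h13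
            + (Real.cos (σ (θ x)) * Real.sin (σ (θ x)) * deriv σ (θ x) * pd 2 ψ x - Real.cos (σ (θ x)) ^ 2 * deriv σ (θ x) * pd 2 ℓ x) * h23)]
    · simp only [vdiv, Pi.add_apply, Pi.smul_apply, smul_eq_mul, grad]
      simp only [key]
      linear_combination Real.cos (σ (θ x)) * hlψ + Real.sin (σ (θ x)) * hlℓ
        + (-Real.sin (σ (θ x)) * deriv σ (θ x)) * h23 + (Real.cos (σ (θ x)) * deriv σ (θ x)) * h13
  · intro x hx
    have h1 := hbcψ x hx
    have h2 := hbcℓ x hx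
    simp only [dot3, Pi.add_apply, Pi.smul_apply, smul_eq_mul] at *
    linear_combination Real.cos (σ (θ x)) * h1 + Real.sin (σ (θ x)) * h2
end
end

section
/- Let ℓ, ψ : ℝ² → ℝ be smooth functions satisfying the Cauchy–Riemann equations ∂_x ℓ = ∂_y ψ and ∂_y ℓ = −∂_x ψ, and let σ : ℝ → ℝ be smooth. Regard ℓ and ψ as functions on ℝ³ of (x, y) only. Then the vector field w(x,y,z) = cos(σ(z))·∇ψ(x,y) + sin(σ(z))·∇ℓ(x,y) satisfies curl w = σ′(z)·w and div w = 0 on ℝ³. -/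
noncomputable section

def pr2 : V3 →L[ℝ] ℝ × ℝ := (ContinuousLinearMap.proj 0).prod (ContinuousLinearMap.proj 1)


lemma hasFDerivAt_comp2 (f : ℝ×ℝ → ℝ) (hf : ContDiff ℝ (⊤ : ℕ∞) f) (x : V3) :
    HasFDerivAt (fun y : V3 => f (y 0, y 1)) ((fderiv ℝ f (pr2 x)).comp pr2) x :=
  ((hf.differentiable (by simp) (pr2 x)).hasFDerivAt).comp x pr2.hasFDerivAt

lemma pd_comp2 (f : ℝ×ℝ → ℝ) (hf : ContDiff ℝ (⊤ : ℕ∞) f) (i : Fin 3) (x : V3) :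
    pd i (fun y => f (y 0, y 1)) x = fderiv ℝ f (pr2 x) (pr2 (ee i)) := by
  rw [pd, (hasFDerivAt_comp2 f hf x).fderiv]; rfl

lemma hasFDerivAt_D (f : ℝ×ℝ → ℝ) (hf : ContDiff ℝ (⊤ : ℕ∞) f) (u : ℝ×ℝ) (x : V3) :
    HasFDerivAt (fun y : V3 => fderiv ℝ f (pr2 y) u)
      (((ContinuousLinearMap.apply ℝ ℝ u).comp (fderiv ℝ (fderiv ℝ f) (pr2 x))).comp pr2) x := by
  have h1 : HasFDerivAt (fderiv ℝ f) (fderiv ℝ (fderiv ℝ f) (pr2 x)) (pr2 x) :=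
    (((hf.fderiv_right (m := 1) (WithTop.coe_le_coe.mpr le_top)).differentiable one_ne_zero) (pr2 x)).hasFDerivAt
  exact ((ContinuousLinearMap.apply ℝ ℝ u).hasFDerivAt.comp (pr2 x) h1).comp x pr2.hasFDerivAt

lemma pd_D (f : ℝ×ℝ → ℝ) (hf : ContDiff ℝ (⊤ : ℕ∞) f) (u : ℝ×ℝ) (j : Fin 3) (x : V3) :
    pd j (fun y => fderiv ℝ f (pr2 y) u) x = fderiv ℝ (fderiv ℝ f) (pr2 x) (pr2 (ee j)) u := by
  rw [pd, (hasFDerivAt_D f hf u x).fderiv]; rfl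

lemma fderiv_eval (f : ℝ×ℝ → ℝ) (hf : ContDiff ℝ (⊤ : ℕ∞) f) (u q a : ℝ×ℝ) :
    fderiv ℝ (fun p => fderiv ℝ f p u) q a = fderiv ℝ (fderiv ℝ f) q a u := by
  have h1 : HasFDerivAt (fderiv ℝ f) (fderiv ℝ (fderiv ℝ f) q) q :=
    (((hf.fderiv_right (m := 1) (WithTop.coe_le_coe.mpr le_top)).differentiable one_ne_zero) q).hasFDerivAt
  have h2 : HasFDerivAt (fun p => fderiv ℝ f p u)
      ((ContinuousLinearMap.apply ℝ ℝ u).comp (fderiv ℝ (fderiv ℝ f) q)) q :=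
    (ContinuousLinearMap.apply ℝ ℝ u).hasFDerivAt.comp q h1
  rw [h2.fderiv]; rfl

lemma snd_sym (f : ℝ×ℝ → ℝ) (hf : ContDiff ℝ (⊤ : ℕ∞) f) (q a b : ℝ×ℝ) :
    fderiv ℝ (fderiv ℝ f) q a b = fderiv ℝ (fderiv ℝ f) q b a :=
  second_derivative_symmetric (fun y => ((hf.differentiable (by simp)) y).hasFDerivAt)
    ((((hf.fderiv_right (m := 1) (WithTop.coe_le_coe.mpr le_top)).differentiable one_ne_zero) q).hasFDerivAt) a b

lemma hasFDerivAt_cos (σ : ℝ → ℝ) (hσ : ContDiff ℝ (⊤ : ℕ∞) σ) (x : V3) :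
    HasFDerivAt (fun y : V3 => Real.cos (σ (y 2)))
      ((-Real.sin (σ (x 2)) * deriv σ (x 2)) • (ContinuousLinearMap.proj 2 : V3 →L[ℝ] ℝ)) x := by
  have h1 : HasDerivAt σ (deriv σ (x 2)) (x 2) := ((hσ.differentiable (by simp)) (x 2)).hasDerivAt
  have hd : HasDerivAt (fun t => Real.cos (σ t)) (-Real.sin (σ (x 2)) * deriv σ (x 2)) (x 2) := by
    simpa [mul_comm, Function.comp_def] using (Real.hasDerivAt_cos (σ (x 2))).comp (x 2) h1
  exact hd.comp_hasFDerivAt x (ContinuousLinearMap.proj 2 : V3 →L[ℝ] ℝ).hasFDerivAt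

lemma hasFDerivAt_sin (σ : ℝ → ℝ) (hσ : ContDiff ℝ (⊤ : ℕ∞) σ) (x : V3) :
    HasFDerivAt (fun y : V3 => Real.sin (σ (y 2)))
      ((Real.cos (σ (x 2)) * deriv σ (x 2)) • (ContinuousLinearMap.proj 2 : V3 →L[ℝ] ℝ)) x := by
  have h1 : HasDerivAt σ (deriv σ (x 2)) (x 2) := ((hσ.differentiable (by simp)) (x 2)).hasDerivAt
  have hd : HasDerivAt (fun t => Real.sin (σ t)) (Real.cos (σ (x 2)) * deriv σ (x 2)) (x 2) := by
    simpa [mul_comm, Function.comp_def] using (Real.hasDerivAt_sin (σ (x 2))).comp (x 2) h1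
  exact hd.comp_hasFDerivAt x (ContinuousLinearMap.proj 2 : V3 →L[ℝ] ℝ).hasFDerivAt

lemma pd_mul (a b : V3 → ℝ) (x : V3) (ha : DifferentiableAt ℝ a x)
    (hb : DifferentiableAt ℝ b x) (j : Fin 3) :
    pd j (fun y => a y * b y) x = pd j a x * b x + a x * pd j b x := by
  rw [pd, fderiv_fun_mul ha hb]; simp [pd]; ring

lemma pd_add (a b : V3 → ℝ) (x : V3) (ha : DifferentiableAt ℝ a x)
    (hb : DifferentiableAt ℝ b x) (j : Fin 3) :
    pd j (fun y => a y + b y) x = pd j a x + pd j b x := by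
  rw [pd, fderiv_fun_add ha hb]; simp [pd]

lemma pd_cos (σ : ℝ → ℝ) (hσ : ContDiff ℝ (⊤ : ℕ∞) σ) (j : Fin 3) (x : V3) :
    pd j (fun y : V3 => Real.cos (σ (y 2))) x
      = -Real.sin (σ (x 2)) * deriv σ (x 2) * ee j 2 := by
  rw [pd, (hasFDerivAt_cos σ hσ x).fderiv]; simp [mul_assoc]

lemma pd_sin (σ : ℝ → ℝ) (hσ : ContDiff ℝ (⊤ : ℕ∞) σ) (j : Fin 3) (x : V3) :
    pd j (fun y : V3 => Real.sin (σ (y 2))) x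
      = Real.cos (σ (x 2)) * deriv σ (x 2) * ee j 2 := by
  rw [pd, (hasFDerivAt_sin σ hσ x).fderiv]; simp [mul_assoc]

lemma pd_w (f g : ℝ×ℝ → ℝ) (hf : ContDiff ℝ (⊤ : ℕ∞) f) (hg : ContDiff ℝ (⊤ : ℕ∞) g)
    (σ : ℝ → ℝ) (hσ : ContDiff ℝ (⊤ : ℕ∞) σ) (i j : Fin 3) (x : V3) :
    pd j (fun y => Real.cos (σ (y 2)) * fderiv ℝ f (pr2 y) (pr2 (ee i))
      + Real.sin (σ (y 2)) * fderiv ℝ g (pr2 y) (pr2 (ee i))) x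
    = -Real.sin (σ (x 2)) * deriv σ (x 2) * ee j 2 * fderiv ℝ f (pr2 x) (pr2 (ee i))
      + Real.cos (σ (x 2)) * fderiv ℝ (fderiv ℝ f) (pr2 x) (pr2 (ee j)) (pr2 (ee i))
      + Real.cos (σ (x 2)) * deriv σ (x 2) * ee j 2 * fderiv ℝ g (pr2 x) (pr2 (ee i))
      + Real.sin (σ (x 2)) * fderiv ℝ (fderiv ℝ g) (pr2 x) (pr2 (ee j)) (pr2 (ee i)) := by
  have dc : DifferentiableAt ℝ (fun y : V3 => Real.cos (σ (y 2))) x :=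
    (hasFDerivAt_cos σ hσ x).differentiableAt
  have ds : DifferentiableAt ℝ (fun y : V3 => Real.sin (σ (y 2))) x :=
    (hasFDerivAt_sin σ hσ x).differentiableAt
  have df : DifferentiableAt ℝ (fun y : V3 => fderiv ℝ f (pr2 y) (pr2 (ee i))) x :=
    (hasFDerivAt_D f hf _ x).differentiableAt
  have dg : DifferentiableAt ℝ (fun y : V3 => fderiv ℝ g (pr2 y) (pr2 (ee i))) x :=
    (hasFDerivAt_D g hg _ x).differentiableAt
  rw [pd_add (fun y => Real.cos (σ (y 2)) * fderiv ℝ f (pr2 y) (pr2 (ee i)))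
    (fun y => Real.sin (σ (y 2)) * fderiv ℝ g (pr2 y) (pr2 (ee i))) _ (dc.mul df) (ds.mul dg), pd_mul _ _ _ dc df, pd_mul _ _ _ ds dg,
    pd_cos σ hσ, pd_sin σ hσ, pd_D f hf, pd_D g hg]
  ring

lemma pr2_e0 : pr2 (ee 0) = ((1:ℝ), (0:ℝ)) := by simp [pr2, ee]
lemma pr2_e1 : pr2 (ee 1) = ((0:ℝ), (1:ℝ)) := by simp [pr2, ee]
lemma pr2_e2 : pr2 (ee 2) = 0 := by simp [pr2, ee]
lemma ee02 : ee 0 2 = 0 := rfl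
lemma ee12 : ee 1 2 = 0 := rfl
lemma ee22 : ee 2 2 = 1 := rfl


/-- For harmonic conjugates `ℓ, ψ` on `ℝ²` (Cauchy–Riemann equations)
and smooth `σ`, the field `w = cos(σ(z))·∇ψ(x,y) + sin(σ(z))·∇ℓ(x,y)` is a solenoidal
Beltrami field on `ℝ³` with proportionality factor `σ'(z)`. -/
theorem stmt4 (ℓ ψ : ℝ × ℝ → ℝ) (hℓ : ContDiff ℝ (⊤ : ℕ∞) ℓ) (hψ : ContDiff ℝ (⊤ : ℕ∞) ψ)
    (hCR1 : ∀ p : ℝ × ℝ, fderiv ℝ ℓ p (1, 0) = fderiv ℝ ψ p (0, 1))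
    (hCR2 : ∀ p : ℝ × ℝ, fderiv ℝ ℓ p (0, 1) = -fderiv ℝ ψ p (1, 0))
    (σ : ℝ → ℝ) (hσ : ContDiff ℝ (⊤ : ℕ∞) σ)
    (w : V3 → V3)
    (hw : w = fun x => Real.cos (σ (x 2)) • grad (fun y => ψ (y 0, y 1)) x +
      Real.sin (σ (x 2)) • grad (fun y => ℓ (y 0, y 1)) x) :
    ∀ x : V3, vcurl w x = deriv σ (x 2) • w x ∧ vdiv w x = 0 := by
  -- second-order CR relations
  have CRa : ∀ q a : ℝ × ℝ, fderiv ℝ (fderiv ℝ ℓ) q a (1,0) = fderiv ℝ (fderiv ℝ ψ) q a (0,1) := by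
    intro q a
    rw [← fderiv_eval ℓ hℓ, ← fderiv_eval ψ hψ]
    have hfun : (fun p => fderiv ℝ ℓ p (1,0)) = (fun p => fderiv ℝ ψ p (0,1)) := funext hCR1
    rw [hfun]
  have CRb : ∀ q a : ℝ × ℝ, fderiv ℝ (fderiv ℝ ℓ) q a (0,1) = -fderiv ℝ (fderiv ℝ ψ) q a (1,0) := by
    intro q a
    rw [← fderiv_eval ℓ hℓ, ← fderiv_eval ψ hψ]
    have hfun : (fun p => fderiv ℝ ℓ p (0,1)) = (fun p => -(fderiv ℝ ψ p (1,0))) := funext hCR2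
    rw [hfun, fderiv_fun_neg]
    simp
  intro x
  have hwfun : ∀ i : Fin 3, (fun y => w y i) =
      fun y => Real.cos (σ (y 2)) * fderiv ℝ ψ (pr2 y) (pr2 (ee i))
        + Real.sin (σ (y 2)) * fderiv ℝ ℓ (pr2 y) (pr2 (ee i)) := by
    intro i; funext y
    rw [hw]
    simp only [Pi.add_apply, Pi.smul_apply, smul_eq_mul, grad]
    rw [pd_comp2 ψ hψ, pd_comp2 ℓ hℓ]
  have hx0 : w x 0 = Real.cos (σ (x 2)) * fderiv ℝ ψ (pr2 x) (1,0)
      + Real.sin (σ (x 2)) * fderiv ℝ ℓ (pr2 x) (1,0) := by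
    have := congrFun (hwfun 0) x; rwa [pr2_e0] at this
  have hx1 : w x 1 = Real.cos (σ (x 2)) * fderiv ℝ ψ (pr2 x) (0,1)
      + Real.sin (σ (x 2)) * fderiv ℝ ℓ (pr2 x) (0,1) := by
    have := congrFun (hwfun 1) x; rwa [pr2_e1] at this
  have hx2 : w x 2 = 0 := by
    have := congrFun (hwfun 2) x; rw [pr2_e2] at this; simpa using this
  constructor
  · funext k
    fin_cases k
    · show pd 1 (fun y => w y 2) x - pd 2 (fun y => w y 1) x = deriv σ (x 2) * w x 0
      rw [hwfun 2, hwfun 1, pd_w ψ ℓ hψ hℓ σ hσ 2 1 x, pd_w ψ ℓ hψ hℓ σ hσ 1 2 x,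
        pr2_e1, pr2_e2, ee12, ee22, hx0]
      simp only [map_zero, ContinuousLinearMap.zero_apply, mul_zero, zero_mul, add_zero,
        zero_add, mul_one]
      rw [hCR1 (pr2 x), hCR2 (pr2 x)]
      ring
    · show pd 2 (fun y => w y 0) x - pd 0 (fun y => w y 2) x = deriv σ (x 2) * w x 1
      rw [hwfun 0, hwfun 2, pd_w ψ ℓ hψ hℓ σ hσ 0 2 x, pd_w ψ ℓ hψ hℓ σ hσ 2 0 x,
        pr2_e0, pr2_e2, ee02, ee22, hx1]
      simp only [map_zero, ContinuousLinearMap.zero_apply, mul_zero, zero_mul, add_zero,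
        zero_add, mul_one]
      rw [hCR1 (pr2 x), hCR2 (pr2 x)]
      ring
    · show pd 0 (fun y => w y 1) x - pd 1 (fun y => w y 0) x = deriv σ (x 2) * w x 2
      rw [hwfun 1, hwfun 0, pd_w ψ ℓ hψ hℓ σ hσ 1 0 x, pd_w ψ ℓ hψ hℓ σ hσ 0 1 x,
        pr2_e0, pr2_e1, ee02, ee12, hx2]
      simp only [mul_zero, zero_mul, add_zero, zero_add, mul_one]
      rw [snd_sym ψ hψ (pr2 x) (0,1) (1,0), snd_sym ℓ hℓ (pr2 x) (0,1) (1,0)]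
      ring
  · show pd 0 (fun y => w y 0) x + pd 1 (fun y => w y 1) x + pd 2 (fun y => w y 2) x = 0
    rw [hwfun 0, hwfun 1, hwfun 2, pd_w ψ ℓ hψ hℓ σ hσ 0 0 x, pd_w ψ ℓ hψ hℓ σ hσ 1 1 x,
      pd_w ψ ℓ hψ hℓ σ hσ 2 2 x, pr2_e0, pr2_e1, pr2_e2, ee02, ee12, ee22]
    simp only [map_zero, ContinuousLinearMap.zero_apply, mul_zero, zero_mul, add_zero,
      zero_add, mul_one]
    have hA : fderiv ℝ (fderiv ℝ ψ) (pr2 x) (1,0) (1,0)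
        = -fderiv ℝ (fderiv ℝ ψ) (pr2 x) (0,1) (0,1) := by
      have h1 := CRb (pr2 x) (1,0)
      have h2 := CRa (pr2 x) (0,1)
      have h3 := snd_sym ℓ hℓ (pr2 x) (1,0) (0,1)
      linarith
    have hB : fderiv ℝ (fderiv ℝ ℓ) (pr2 x) (1,0) (1,0)
        = -fderiv ℝ (fderiv ℝ ℓ) (pr2 x) (0,1) (0,1) := by
      have h1 := CRa (pr2 x) (1,0)
      have h2 := CRb (pr2 x) (0,1)
      have h3 := snd_sym ψ hψ (pr2 x) (1,0) (0,1)
      linarith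
    rw [hA, hB]
    ring
end
end

section
/- Let Ω ⊆ ℝ³ be a bounded open set, let w : Ω → ℝ³ be a smooth vector field with w ≠ 0 at every point of Ω, let κ ∈ ℝ with κ ≠ 0, and set ξ = w/|w|^{2κ}. Then w satisfies w × curl w = κ·∇(|w|²) on Ω if and only if ξ × curl ξ = 0 and w·∇|w| = 0 on Ω. -/
noncomputable section

/-- For a nonvanishing smooth `w` on a bounded open `Ω` and `κ ≠ 0`, with
`ξ = w/|w|^{2κ}`, the generalized Beltrami equation `w × curl w = κ·∇(|w|²)` holds on `Ω`
iff `ξ × curl ξ = 0` and `w·∇|w| = 0` on `Ω`. -/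
theorem stmt7 (Ω : Set V3) (hΩ : IsOpen Ω) (hb : Bornology.IsBounded Ω)
    (w : V3 → V3) (hw : ContDiffOn ℝ (⊤ : ℕ∞) w Ω) (hwne : ∀ x ∈ Ω, w x ≠ 0)
    (κ : ℝ) (hκ : κ ≠ 0)
    (ξ : V3 → V3) (hξ : ξ = fun x => (norm3 (w x) ^ (2 * κ))⁻¹ • w x) :
    (∀ x ∈ Ω, cross3 (w x) (vcurl w x) = κ • grad (fun y => dot3 (w y) (w y)) x) ↔
      (∀ x ∈ Ω, cross3 (ξ x) (vcurl ξ x) = 0 ∧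
        dot3 (w x) (grad (fun y => norm3 (w y)) x) = 0) := by
  -- rewrite ξ using rpow of the squared norm
  have hQnn : ∀ y, (0:ℝ) ≤ dot3 (w y) (w y) := by
    intro y
    have : dot3 (w y) (w y) = w y 0 ^ 2 + w y 1 ^ 2 + w y 2 ^ 2 := by
      simp [dot3]; ring
    rw [this]; positivity
  have hξ' : ξ = fun y => ((dot3 (w y) (w y)) ^ (-κ)) • w y := by
    rw [hξ]; funext y
    congr 1
    rw [norm3, Real.sqrt_eq_rpow, ← Real.rpow_mul (hQnn y), ← Real.rpow_neg (hQnn y)]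
    congr 1
    ring
  refine forall₂_congr fun x hx => ?_
  -- differentiability
  have hwd : DifferentiableAt ℝ w x :=
    (hw.differentiableOn (by simp)).differentiableAt (hΩ.mem_nhds hx)
  have hj : ∀ j, HasFDerivAt (fun y => w y j) (fderiv ℝ (fun y => w y j) x) x := by
    intro j
    have : DifferentiableAt ℝ (fun y => w y j) x :=
      ((ContinuousLinearMap.proj j : V3 →L[ℝ] ℝ).differentiableAt).comp x hwd
    exact this.hasFDerivAt
  have hq : HasFDerivAt (fun y => dot3 (w y) (w y))
      ((w x 0 • fderiv ℝ (fun y => w y 0) x + w x 0 • fderiv ℝ (fun y => w y 0) x) +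
       (w x 1 • fderiv ℝ (fun y => w y 1) x + w x 1 • fderiv ℝ (fun y => w y 1) x) +
       (w x 2 • fderiv ℝ (fun y => w y 2) x + w x 2 • fderiv ℝ (fun y => w y 2) x)) x :=
    (((hj 0).mul (hj 0)).add ((hj 1).mul (hj 1))).add ((hj 2).mul (hj 2))
  -- abbreviations (plain notation, no `set`)
  have hQpos : 0 < dot3 (w x) (w x) := by
    have hne : w x 0 ≠ 0 ∨ w x 1 ≠ 0 ∨ w x 2 ≠ 0 := by
      by_contra h
      push_neg at h
      apply hwne x hx
      funext j
      fin_cases j <;> simp [h.1, h.2.1, h.2.2]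
    have h0 : (0:ℝ) ≤ w x 0 * w x 0 := mul_self_nonneg _
    have h1 : (0:ℝ) ≤ w x 1 * w x 1 := mul_self_nonneg _
    have h2 : (0:ℝ) ≤ w x 2 * w x 2 := mul_self_nonneg _
    simp only [dot3]
    rcases hne with h | h | h <;> nlinarith [mul_self_pos.2 h]
  have hspos : 0 < (dot3 (w x) (w x)) ^ κ := Real.rpow_pos_of_pos hQpos κ
  have hsne : (dot3 (w x) (w x)) ^ κ ≠ 0 := hspos.ne'
  have hQne : dot3 (w x) (w x) ≠ 0 := hQpos.ne'
  -- rpow identities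
  have hnegκ : (dot3 (w x) (w x)) ^ (-κ) = ((dot3 (w x) (w x)) ^ κ)⁻¹ :=
    Real.rpow_neg hQpos.le κ
  have hnegκ1 : (dot3 (w x) (w x)) ^ (-κ - 1)
      = ((dot3 (w x) (w x)) ^ κ)⁻¹ / (dot3 (w x) (w x)) := by
    rw [Real.rpow_sub hQpos, Real.rpow_one, Real.rpow_neg hQpos.le]
  -- value of the gradient of |w|²
  have hpdq : ∀ i, pd i (fun y => dot3 (w y) (w y)) x
      = 2 * (w x 0 * pd i (fun y => w y 0) x + w x 1 * pd i (fun y => w y 1) x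
           + w x 2 * pd i (fun y => w y 2) x) := by
    intro i
    rw [pd, hq.fderiv]
    simp only [ContinuousLinearMap.add_apply, ContinuousLinearMap.coe_smul',
      Pi.smul_apply, smul_eq_mul, pd]
    ring
  -- derivative of the rpow factor
  have hrpow : HasFDerivAt (fun y => (dot3 (w y) (w y)) ^ (-κ))
      ((-κ * (dot3 (w x) (w x)) ^ (-κ - 1)) •
        ((w x 0 • fderiv ℝ (fun y => w y 0) x + w x 0 • fderiv ℝ (fun y => w y 0) x) +
         (w x 1 • fderiv ℝ (fun y => w y 1) x + w x 1 • fderiv ℝ (fun y => w y 1) x) +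
         (w x 2 • fderiv ℝ (fun y => w y 2) x + w x 2 • fderiv ℝ (fun y => w y 2) x))) x :=
    by have := (Real.hasDerivAt_rpow_const (p := -κ) (Or.inl hQne)).comp_hasFDerivAt x hq; exact this
  -- derivatives of ξ components
  have hpdξ : ∀ i j, pd i (fun y => ξ y j) x
      = -κ * (((dot3 (w x) (w x)) ^ κ)⁻¹ / (dot3 (w x) (w x)))
          * (2 * (w x 0 * pd i (fun y => w y 0) x + w x 1 * pd i (fun y => w y 1) x
               + w x 2 * pd i (fun y => w y 2) x)) * w x j
        + ((dot3 (w x) (w x)) ^ κ)⁻¹ * pd i (fun y => w y j) x := by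
    intro i j
    have heq : (fun y => ξ y j) = fun y => (dot3 (w y) (w y)) ^ (-κ) * w y j := by
      funext y
      simp only [hξ', Pi.smul_apply, smul_eq_mul]
    have hd := hrpow.mul (hj j)
    rw [heq, pd, (show HasFDerivAt (fun y => (dot3 (w y) (w y)) ^ (-κ) * w y j) _ x from hd).fderiv]
    simp only [ContinuousLinearMap.add_apply, ContinuousLinearMap.coe_smul',
      Pi.smul_apply, smul_eq_mul, pd, hnegκ, hnegκ1]
    ring
  -- value of ξ at x
  have hξx : ∀ j, ξ x j = ((dot3 (w x) (w x)) ^ κ)⁻¹ * w x j := by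
    intro j
    rw [hξ']
    simp only [Pi.smul_apply, smul_eq_mul, hnegκ]
  -- derivative of |w|
  have hρ : HasFDerivAt (fun y => norm3 (w y))
      ((1 / (2 * Real.sqrt (dot3 (w x) (w x)))) •
        ((w x 0 • fderiv ℝ (fun y => w y 0) x + w x 0 • fderiv ℝ (fun y => w y 0) x) +
         (w x 1 • fderiv ℝ (fun y => w y 1) x + w x 1 • fderiv ℝ (fun y => w y 1) x) +
         (w x 2 • fderiv ℝ (fun y => w y 2) x + w x 2 • fderiv ℝ (fun y => w y 2) x))) x :=
    (Real.hasDerivAt_sqrt hQne).comp_hasFDerivAt x hq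
  have hρpos : 0 < Real.sqrt (dot3 (w x) (w x)) := Real.sqrt_pos.2 hQpos
  have hpdρ : ∀ i, pd i (fun y => norm3 (w y)) x
      = (2 * (w x 0 * pd i (fun y => w y 0) x + w x 1 * pd i (fun y => w y 1) x
           + w x 2 * pd i (fun y => w y 2) x)) / (2 * Real.sqrt (dot3 (w x) (w x))) := by
    intro i
    rw [pd, hρ.fderiv]
    simp only [ContinuousLinearMap.add_apply, ContinuousLinearMap.coe_smul',
      Pi.smul_apply, smul_eq_mul, pd]
    field_simp
    ring
  have vec_eq : ∀ u v : V3, u = v ↔ (u 0 = v 0 ∧ u 1 = v 1 ∧ u 2 = v 2) := by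
    intro u v
    constructor
    · intro h; exact ⟨congrFun h 0, congrFun h 1, congrFun h 2⟩
    · rintro ⟨h0, h1, h2⟩; funext i; fin_cases i <;> assumption
  rw [vec_eq, vec_eq]
  simp only [dot3] at hsne hQne hρpos
  simp only [cross3, vcurl, grad, Matrix.cons_val_zero, Matrix.cons_val_one,
    Matrix.head_cons, Matrix.cons_val_two, Matrix.tail_cons, Pi.smul_apply,
    smul_eq_mul, Pi.zero_apply, hpdq, hpdξ, hpdρ, hξx]
  simp only [dot3, grad, hpdρ]
  set a0 := w x 0 with ha0
  set a1 := w x 1 with ha1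
  set a2 := w x 2 with ha2
  set d00 := pd 0 (fun y => w y 0) x with hd00
  set d01 := pd 0 (fun y => w y 1) x with hd01
  set d02 := pd 0 (fun y => w y 2) x with hd02
  set d10 := pd 1 (fun y => w y 0) x with hd10
  set d11 := pd 1 (fun y => w y 1) x with hd11
  set d12 := pd 1 (fun y => w y 2) x with hd12
  set d20 := pd 2 (fun y => w y 0) x with hd20
  set d21 := pd 2 (fun y => w y 1) x with hd21
  set d22 := pd 2 (fun y => w y 2) x with hd22
  have hrne : Real.sqrt (a0 * a0 + a1 * a1 + a2 * a2) ≠ 0 := ne_of_gt hρpos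
  have hsinv : ((a0 * a0 + a1 * a1 + a2 * a2) ^ κ) * ((a0 * a0 + a1 * a1 + a2 * a2) ^ κ)⁻¹ = 1 := mul_inv_cancel₀ hsne
  have hQinv : (a0 * a0 + a1 * a1 + a2 * a2) * (a0 * a0 + a1 * a1 + a2 * a2)⁻¹ = 1 := mul_inv_cancel₀ hQne
  constructor
  · rintro ⟨e0, e1, e2⟩
    have hκS : κ * (a0 * (2 * (a0 * d00 + a1 * d01 + a2 * d02)) + a1 * (2 * (a0 * d10 + a1 * d11 + a2 * d12)) + a2 * (2 * (a0 * d20 + a1 * d21 + a2 * d22))) = 0 := by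
      linear_combination (-a0) * e0 - a1 * e1 - a2 * e2
    have hS : (a0 * (2 * (a0 * d00 + a1 * d01 + a2 * d02)) + a1 * (2 * (a0 * d10 + a1 * d11 + a2 * d12)) + a2 * (2 * (a0 * d20 + a1 * d21 + a2 * d22))) = 0 := (mul_eq_zero.mp hκS).resolve_left hκ
    refine ⟨⟨?_, ?_, ?_⟩, ?_⟩
    · linear_combination (((a0 * a0 + a1 * a1 + a2 * a2) ^ κ)⁻¹ * ((a0 * a0 + a1 * a1 + a2 * a2) ^ κ)⁻¹) * e0 + (κ * ((a0 * a0 + a1 * a1 + a2 * a2) ^ κ)⁻¹ * ((a0 * a0 + a1 * a1 + a2 * a2) ^ κ)⁻¹ * (a0 * a0 + a1 * a1 + a2 * a2)⁻¹ * a0) * hS - (κ * ((a0 * a0 + a1 * a1 + a2 * a2) ^ κ)⁻¹ * ((a0 * a0 + a1 * a1 + a2 * a2) ^ κ)⁻¹ * (2 * (a0 * d00 + a1 * d01 + a2 * d02))) * hQinv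
    · linear_combination (((a0 * a0 + a1 * a1 + a2 * a2) ^ κ)⁻¹ * ((a0 * a0 + a1 * a1 + a2 * a2) ^ κ)⁻¹) * e1 + (κ * ((a0 * a0 + a1 * a1 + a2 * a2) ^ κ)⁻¹ * ((a0 * a0 + a1 * a1 + a2 * a2) ^ κ)⁻¹ * (a0 * a0 + a1 * a1 + a2 * a2)⁻¹ * a1) * hS - (κ * ((a0 * a0 + a1 * a1 + a2 * a2) ^ κ)⁻¹ * ((a0 * a0 + a1 * a1 + a2 * a2) ^ κ)⁻¹ * (2 * (a0 * d10 + a1 * d11 + a2 * d12))) * hQinv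
    · linear_combination (((a0 * a0 + a1 * a1 + a2 * a2) ^ κ)⁻¹ * ((a0 * a0 + a1 * a1 + a2 * a2) ^ κ)⁻¹) * e2 + (κ * ((a0 * a0 + a1 * a1 + a2 * a2) ^ κ)⁻¹ * ((a0 * a0 + a1 * a1 + a2 * a2) ^ κ)⁻¹ * (a0 * a0 + a1 * a1 + a2 * a2)⁻¹ * a2) * hS - (κ * ((a0 * a0 + a1 * a1 + a2 * a2) ^ κ)⁻¹ * ((a0 * a0 + a1 * a1 + a2 * a2) ^ κ)⁻¹ * (2 * (a0 * d20 + a1 * d21 + a2 * d22))) * hQinv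
    · field_simp
      linear_combination ((Real.sqrt (a0 ^ 2 + a1 ^ 2 + a2 ^ 2))⁻¹ / 2) * hS
  · rintro ⟨⟨c0, c1, c2⟩, cdot⟩
    have hS : (a0 * (2 * (a0 * d00 + a1 * d01 + a2 * d02)) + a1 * (2 * (a0 * d10 + a1 * d11 + a2 * d12)) + a2 * (2 * (a0 * d20 + a1 * d21 + a2 * d22))) = 0 := by
      field_simp at cdot
      have hr2 : Real.sqrt (a0 ^ 2 + a1 ^ 2 + a2 ^ 2) * (Real.sqrt (a0 ^ 2 + a1 ^ 2 + a2 ^ 2))⁻¹ = 1 := mul_inv_cancel₀ (by rw [pow_two, pow_two, pow_two]; exact hrne)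
      linear_combination (2 * Real.sqrt (a0 ^ 2 + a1 ^ 2 + a2 ^ 2)) * cdot - (a0 * (2 * (a0 * d00 + a1 * d01 + a2 * d02)) + a1 * (2 * (a0 * d10 + a1 * d11 + a2 * d12)) + a2 * (2 * (a0 * d20 + a1 * d21 + a2 * d22))) * hr2
    refine ⟨?_, ?_, ?_⟩
    · linear_combination ((a0 * a0 + a1 * a1 + a2 * a2) ^ κ) * ((a0 * a0 + a1 * a1 + a2 * a2) ^ κ) * c0 + ((κ * (2 * (a0 * d00 + a1 * d01 + a2 * d02)) - (a1 * (d01 - d10) - a2 * (d20 - d02))) * ((((a0 * a0 + a1 * a1 + a2 * a2) ^ κ) * ((a0 * a0 + a1 * a1 + a2 * a2) ^ κ)⁻¹) + 1)) * hsinv + (κ * (2 * (a0 * d00 + a1 * d01 + a2 * d02)) * (((a0 * a0 + a1 * a1 + a2 * a2) ^ κ) * ((a0 * a0 + a1 * a1 + a2 * a2) ^ κ)⁻¹) * (((a0 * a0 + a1 * a1 + a2 * a2) ^ κ) * ((a0 * a0 + a1 * a1 + a2 * a2) ^ κ)⁻¹)) * hQinv - (κ * (((a0 * a0 + a1 * a1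 + a2 * a2) ^ κ) * ((a0 * a0 + a1 * a1 + a2 * a2) ^ κ)⁻¹) * (((a0 * a0 + a1 * a1 + a2 * a2) ^ κ) * ((a0 * a0 + a1 * a1 + a2 * a2) ^ κ)⁻¹) * (a0 * a0 + a1 * a1 + a2 * a2)⁻¹ * a0) * hS
    · linear_combination ((a0 * a0 + a1 * a1 + a2 * a2) ^ κ) * ((a0 * a0 + a1 * a1 + a2 * a2) ^ κ) * c1 + ((κ * (2 * (a0 * d10 + a1 * d11 + a2 * d12)) - (a2 * (d12 - d21) - a0 * (d01 - d10))) * ((((a0 * a0 + a1 * a1 + a2 * a2) ^ κ) * ((a0 * a0 + a1 * a1 + a2 * a2) ^ κ)⁻¹) + 1)) * hsinv + (κ * (2 * (a0 * d10 + a1 * d11 + a2 * d12)) * (((a0 * a0 + a1 * a1 + a2 * a2) ^ κ) * ((a0 * a0 + a1 * a1 + a2 * a2) ^ κ)⁻¹) * (((a0 * a0 + a1 * a1 + a2 * a2) ^ κ) * ((a0 * a0 + a1 * a1 + a2 * a2) ^ κ)⁻¹)) * hQinv - (κ * (((a0 * a0 + a1 * a1 + a2 * a2) ^ κ) * ((a0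 * a0 + a1 * a1 + a2 * a2) ^ κ)⁻¹) * (((a0 * a0 + a1 * a1 + a2 * a2) ^ κ) * ((a0 * a0 + a1 * a1 + a2 * a2) ^ κ)⁻¹) * (a0 * a0 + a1 * a1 + a2 * a2)⁻¹ * a1) * hS
    · linear_combination ((a0 * a0 + a1 * a1 + a2 * a2) ^ κ) * ((a0 * a0 + a1 * a1 + a2 * a2) ^ κ) * c2 + ((κ * (2 * (a0 * d20 + a1 * d21 + a2 * d22)) - (a0 * (d20 - d02) - a1 * (d12 - d21))) * ((((a0 * a0 + a1 * a1 + a2 * a2) ^ κ) * ((a0 * a0 + a1 * a1 + a2 * a2) ^ κ)⁻¹) + 1)) * hsinv + (κ * (2 * (a0 * d20 + a1 * d21 + a2 * d22)) * (((a0 * a0 + a1 * a1 + a2 * a2) ^ κ) * ((a0 * a0 + a1 * a1 + a2 * a2) ^ κ)⁻¹) * (((a0 * a0 + a1 * a1 + a2 * a2) ^ κ) * ((a0 * a0 + a1 * a1 + a2 * a2) ^ κ)⁻¹)) * hQinv - (κ * (((a0 * a0 + a1 * a1 + a2 * a2) ^ κ) * ((a0 * a0 + a1 * a1 + a2 * a2)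 ^ κ)⁻¹) * (((a0 * a0 + a1 * a1 + a2 * a2) ^ κ) * ((a0 * a0 + a1 * a1 + a2 * a2) ^ κ)⁻¹) * (a0 * a0 + a1 * a1 + a2 * a2)⁻¹ * a2) * hS
end
end

section
/- Let α : ℝ² → ℝ be smooth, define L_z(x,y,z) = x·cos z − y·sin z, and define the vector field on ℝ³ by w(x,y,z) = α(z, L_z(x,y,z))·(sin z, cos z, 0), i.e., w = α(z,L_z)·(cos z·∇y + sin z·∇x). Then w satisfies w × curl w = (1/2)·∇(|w|²), div w = 0, |w| = |α(z, L_z)|, and w·∇z = w·∇L_z = 0 at every point of ℝ³. -/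
noncomputable section

/-- Auxiliary: the `i`-th coordinate projection as a continuous linear map. -/
def Pj (i : Fin 3) : V3 →L[ℝ] ℝ := ContinuousLinearMap.proj i

/-- Auxiliary: compute `pd` from a `HasFDerivAt` fact. -/
lemma pd_eq {f : V3 → ℝ} {f' : V3 →L[ℝ] ℝ} {x : V3} (h : HasFDerivAt f f' x) (i : Fin 3) :
    pd i f x = f' (ee i) := by rw [pd, h.fderiv]

set_option maxHeartbeats 2000000 in
/-- With `L_z = x cos z − y sin z`, the field
`w = α(z, L_z)·(sin z, cos z, 0)` solves the generalized Beltrami equation with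
`κ = 1/2`, is solenoidal, has `|w| = |α(z, L_z)|`, and admits `z` and `L_z` as
invariants. -/
theorem stmt10 (α : ℝ × ℝ → ℝ) (hα : ContDiff ℝ (⊤ : ℕ∞) α)
    (L : V3 → ℝ) (hL : L = fun x => x 0 * Real.cos (x 2) - x 1 * Real.sin (x 2))
    (w : V3 → V3)
    (hw : w = fun x => α (x 2, L x) • ![Real.sin (x 2), Real.cos (x 2), 0]) :
    ∀ x : V3,
      cross3 (w x) (vcurl w x) = (1 / 2 : ℝ) • grad (fun y => dot3 (w y) (w y)) x ∧
      vdiv w x = 0 ∧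
      norm3 (w x) = |α (x 2, L x)| ∧
      dot3 (w x) (grad (fun y => y 2) x) = 0 ∧
      dot3 (w x) (grad L x) = 0 := by
  subst hL hw
  intro x
  have pyth := Real.sin_sq_add_cos_sq (x 2)
  have h0 : HasFDerivAt (fun y : V3 => y 0) (Pj 0) x := (Pj 0).hasFDerivAt
  have h1 : HasFDerivAt (fun y : V3 => y 1) (Pj 1) x := (Pj 1).hasFDerivAt
  have h2 : HasFDerivAt (fun y : V3 => y 2) (Pj 2) x := (Pj 2).hasFDerivAt
  have hs : HasFDerivAt (fun y : V3 => Real.sin (y 2)) (Real.cos (x 2) • Pj 2) x :=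
    by have := (Real.hasDerivAt_sin (x 2)).comp_hasFDerivAt x h2; exact this
  have hc : HasFDerivAt (fun y : V3 => Real.cos (y 2)) ((-Real.sin (x 2)) • Pj 2) x :=
    by have := (Real.hasDerivAt_cos (x 2)).comp_hasFDerivAt x h2; exact this
  have hLd : HasFDerivAt (fun y : V3 => y 0 * Real.cos (y 2) - y 1 * Real.sin (y 2)) _ x :=
    (h0.mul hc).sub (h1.mul hs)
  have hA : HasFDerivAt (fun y : V3 => α (y 2, y 0 * Real.cos (y 2) - y 1 * Real.sin (y 2)))
      ((fderiv ℝ α (x 2, x 0 * Real.cos (x 2) - x 1 * Real.sin (x 2))).comp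
        ((Pj 2).prod ((x 0 • ((-Real.sin (x 2)) • Pj 2) + Real.cos (x 2) • Pj 0)
          - (x 1 • (Real.cos (x 2) • Pj 2) + Real.sin (x 2) • Pj 1)))) x :=
    ((hα.differentiable (by simp) _).hasFDerivAt).comp x (h2.prodMk hLd)
  have hW0 : HasFDerivAt (fun y : V3 => α (y 2, y 0 * Real.cos (y 2) - y 1 * Real.sin (y 2)) * Real.sin (y 2)) _ x := hA.mul hs
  have hW1 : HasFDerivAt (fun y : V3 => α (y 2, y 0 * Real.cos (y 2) - y 1 * Real.sin (y 2)) * Real.cos (y 2)) _ x := hA.mul hc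
  have hQ : HasFDerivAt (fun y : V3 => α (y 2, y 0 * Real.cos (y 2) - y 1 * Real.sin (y 2)) * Real.sin (y 2) * (α (y 2, y 0 * Real.cos (y 2) - y 1 * Real.sin (y 2)) * Real.sin (y 2)) +
      α (y 2, y 0 * Real.cos (y 2) - y 1 * Real.sin (y 2)) * Real.cos (y 2) * (α (y 2, y 0 * Real.cos (y 2) - y 1 * Real.sin (y 2)) * Real.cos (y 2))) _ x := (hW0.mul hW0).add (hW1.mul hW1)
  set D := fderiv ℝ α (x 2, x 0 * Real.cos (x 2) - x 1 * Real.sin (x 2)) with hD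
  set a1 := D ((1:ℝ), (0:ℝ)) with ha1
  set a2 := D ((0:ℝ), (1:ℝ)) with ha2
  have hDα : ∀ u v : ℝ, D (u, v) = u * a1 + v * a2 := by
    intro u v
    have : (u, v) = u • ((1 : ℝ), (0 : ℝ)) + v • ((0 : ℝ), (1 : ℝ)) := by
      simp [Prod.ext_iff]
    rw [this, map_add, map_smul, map_smul, smul_eq_mul, smul_eq_mul, ha1, ha2]
  have hz : ∀ i : Fin 3, pd i (fun _ : V3 => (0:ℝ)) x = 0 := fun i => by simp [pd]
  refine ⟨?_, ?_, ?_, ?_, ?_⟩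
  · funext i
    fin_cases i <;>
    · simp only [cross3, vcurl, grad, Pi.smul_apply, Matrix.cons_val_zero, Matrix.cons_val_one,
        Matrix.head_cons, Matrix.cons_val_two, Matrix.tail_cons, smul_eq_mul, mul_zero,
        dot3, add_zero]
      rw [pd_eq hW0, pd_eq hW1, pd_eq hQ, pd_eq hW0, pd_eq hW1]
      simp only [Pj, ee, ContinuousLinearMap.add_apply, ContinuousLinearMap.smul_apply,
        ContinuousLinearMap.sub_apply, ContinuousLinearMap.coe_comp', Function.comp_apply,
        ContinuousLinearMap.prod_apply, ContinuousLinearMap.proj_apply, smul_eq_mul]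
      norm_num [Fin.ext_iff, hDα, hz]
      first
      | linear_combination (α (x 2, x 0 * Real.cos (x 2) - x 1 * Real.sin (x 2)) * Real.cos (x 2) * a2) * pyth
      | linear_combination (-(α (x 2, x 0 * Real.cos (x 2) - x 1 * Real.sin (x 2)) * Real.sin (x 2) * a2)) * pyth
      | linear_combination (α (x 2, x 0 * Real.cos (x 2) - x 1 * Real.sin (x 2)) * (a1 + (-(x 0 * Real.sin (x 2)) - x 1 * Real.cos (x 2)) * a2)) * pyth
      | linear_combination (α (x 2, x 0 * Real.cos (x 2) - x 1 * Real.sin (x 2)) * Real.sin (x 2) * a2) * pyth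
      | linear_combination (-(α (x 2, x 0 * Real.cos (x 2) - x 1 * Real.sin (x 2)) * Real.cos (x 2) * a2)) * pyth
      | linear_combination (-(α (x 2, x 0 * Real.cos (x 2) - x 1 * Real.sin (x 2)) * (a1 + (-(x 0 * Real.sin (x 2)) - x 1 * Real.cos (x 2)) * a2))) * pyth
      | ring
  · simp only [vdiv, Pi.smul_apply, Matrix.cons_val_zero, Matrix.cons_val_one, Matrix.head_cons,
      Matrix.cons_val_two, Matrix.tail_cons, smul_eq_mul, mul_zero]
    rw [pd_eq hW0, pd_eq hW1]
    simp only [pd, fderiv_const, Pi.zero_apply, ContinuousLinearMap.zero_apply]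
    simp [Pj, ee, Fin.ext_iff, hDα]
    ring
  · simp only [norm3, dot3, Pi.smul_apply, Matrix.cons_val_zero, Matrix.cons_val_one,
      Matrix.head_cons, Matrix.cons_val_two, Matrix.tail_cons, smul_eq_mul, mul_zero, add_zero]
    rw [show α (x 2, x 0 * Real.cos (x 2) - x 1 * Real.sin (x 2)) * Real.sin (x 2) *
        (α (x 2, x 0 * Real.cos (x 2) - x 1 * Real.sin (x 2)) * Real.sin (x 2)) +
        α (x 2, x 0 * Real.cos (x 2) - x 1 * Real.sin (x 2)) * Real.cos (x 2) *
        (α (x 2, x 0 * Real.cos (x 2) - x 1 * Real.sin (x 2)) * Real.cos (x 2)) =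
        (α (x 2, x 0 * Real.cos (x 2) - x 1 * Real.sin (x 2))) ^ 2 by nlinarith [pyth]]
    exact Real.sqrt_sq_eq_abs _
  · simp only [dot3, grad, Pi.smul_apply, Matrix.cons_val_zero, Matrix.cons_val_one,
      Matrix.head_cons, Matrix.cons_val_two, Matrix.tail_cons, smul_eq_mul, mul_zero]
    rw [pd_eq h2, pd_eq h2, pd_eq h2]
    simp [Pj, ee, Fin.ext_iff]
  · simp only [dot3, grad, Pi.smul_apply, Matrix.cons_val_zero, Matrix.cons_val_one,
      Matrix.head_cons, Matrix.cons_val_two, Matrix.tail_cons, smul_eq_mul, mul_zero]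
    rw [pd_eq hLd, pd_eq hLd, pd_eq hLd]
    simp [Pj, ee, Fin.ext_iff]
    ring
end
end
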